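/- arXiv:2603.14620 — 4 statements merged into one kernel-verified Lean document; each statement's English description precedes it below -/
import Mathlib

section
/- Let P and Q be orthogonal projectors on ℂ^N (i.e., P = P² = P*, Q = Q² = Q*) of the same rank. Then the operator norms satisfy ‖Q - P‖ = ‖(I - Q) P‖ = ‖(I - P) Q‖. -/
open Matrix

/-- The spectral (operator) norm of a complex `N × N` matrix. -/
noncomputable def specNorm {N : ℕ} (M : Matrix (Fin N) (Fin N) ℂ) : ℝ :=
  ‖Matrix.toEuclideanCLM (𝕜 := ℂ) M‖

namespace ProjDiffAux

open ContinuousLinearMap Module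
open scoped InnerProduct InnerProductSpace

variable {E : Type*} [NormedAddCommGroup E] [InnerProductSpace ℂ E] [FiniteDimensional ℂ E]
variable {U V : Type*} [NormedAddCommGroup U] [InnerProductSpace ℂ U] [FiniteDimensional ℂ U]
  [NormedAddCommGroup V] [InnerProductSpace ℂ V] [FiniteDimensional ℂ V]

/-- scaling a minimality property on the unit sphere of a submodule. -/
lemma scale_gen {W W' : Type*} [NormedAddCommGroup W] [NormedSpace ℂ W]
    [NormedAddCommGroup W'] [NormedSpace ℂ W'] (f : W →L[ℂ] W') (s : Submodule ℂ W)
    {x₀ : W} (hx₀ : ‖x₀‖ = 1)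
    (hmin : ∀ u ∈ s, ‖u‖ = 1 → ‖f x₀‖ ≤ ‖f u‖) :
    ∀ u ∈ s, ‖f x₀‖ * ‖u‖ ≤ ‖f u‖ := by
  intro u hu
  rcases eq_or_ne u 0 with rfl | hne
  · simp
  · have hnu : (0:ℝ) < ‖u‖ := norm_pos_iff.mpr hne
    have hmem : ((‖u‖ : ℂ)⁻¹ • u) ∈ s := s.smul_mem _ hu
    have hunit : ‖(‖u‖ : ℂ)⁻¹ • u‖ = 1 := by
      rw [norm_smul, norm_inv, Complex.norm_real, Real.norm_eq_abs, abs_norm]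
      field_simp
    have h := hmin _ hmem hunit
    rw [_root_.map_smul, norm_smul, norm_inv, Complex.norm_real, Real.norm_eq_abs, abs_norm] at h
    calc ‖f x₀‖ * ‖u‖ ≤ (‖u‖⁻¹ * ‖f u‖) * ‖u‖ :=
          mul_le_mul_of_nonneg_right h (le_of_lt hnu)
      _ = ‖f u‖ := by field_simp

/-- The key inequality: a lower bound for the minimum singular value of the adjoint of a
square operator in terms of the minimum singular value of the operator. -/
lemma half (T : U →L[ℂ] V) (hdim : finrank ℂ U = finrank ℂ V)
    (m : ℝ) (hm : ∀ x : U, m * ‖x‖ ≤ ‖T x‖) {y : V} (hy : ‖y‖ = 1) :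
    m ≤ ‖(T†) y‖ := by
  rcases le_or_gt m 0 with h | h
  · exact h.trans (norm_nonneg _)
  · have hker : ∀ x : U, T x = 0 → x = 0 := by
      intro x hx
      have h1 := hm x
      rw [hx, norm_zero] at h1
      have h2 : ‖x‖ ≤ 0 := by nlinarith
      exact norm_le_zero_iff.mp h2
    have hinj : Function.Injective T := by
      intro a b hab
      have h1 : T (a - b) = 0 := by rw [map_sub, hab, sub_self]
      have h2 := hker _ h1
      exact sub_eq_zero.mp h2
    have hsurj : Function.Surjective T :=
      (LinearMap.injective_iff_surjective_of_finrank_eq_finrank hdim).mp hinj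
    obtain ⟨x₁, hx₁⟩ := hsurj y
    have h1 : ⟪(T†) y, x₁⟫_ℂ = 1 := by
      rw [adjoint_inner_left, hx₁, inner_self_eq_norm_sq_to_K, hy]
      norm_num
    have h2 : (1:ℝ) ≤ ‖(T†) y‖ * ‖x₁‖ := by
      calc (1:ℝ) = ‖(⟪(T†) y, x₁⟫_ℂ)‖ := by rw [h1]; simp
        _ ≤ ‖(T†) y‖ * ‖x₁‖ := norm_inner_le_norm _ _
    have h3 : m * ‖x₁‖ ≤ 1 := by
      have := hm x₁
      rwa [hx₁, hy] at this
    nlinarith [norm_nonneg x₁, norm_nonneg ((T†) y)]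

/-- Equality of minimum singular values of a square operator and its adjoint. -/
lemma min_eq (T : U →L[ℂ] V) (hdim : finrank ℂ U = finrank ℂ V)
    {x₀ : U} (hx₀ : ‖x₀‖ = 1) (hminx : ∀ x : U, ‖x‖ = 1 → ‖T x₀‖ ≤ ‖T x‖)
    {y₀ : V} (hy₀ : ‖y₀‖ = 1) (hminy : ∀ y : V, ‖y‖ = 1 → ‖(T†) y₀‖ ≤ ‖(T†) y‖) :
    ‖T x₀‖ = ‖(T†) y₀‖ := by
  have hsx : ∀ x : U, ‖T x₀‖ * ‖x‖ ≤ ‖T x‖ := by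
    intro x
    exact scale_gen T ⊤ hx₀ (fun u _ hu => hminx u hu) x trivial
  have hsy : ∀ y : V, ‖(T†) y₀‖ * ‖y‖ ≤ ‖(T†) y‖ := by
    intro y
    exact scale_gen (T†) ⊤ hy₀ (fun u _ hu => hminy u hu) y trivial
  have h1 : ‖T x₀‖ ≤ ‖(T†) y₀‖ := half T hdim _ hsx hy₀
  have h2 : ‖(T†) y₀‖ ≤ ‖T x₀‖ := by
    have := half (T†) hdim.symm _ hsy hx₀
    rwa [adjoint_adjoint] at this
  linarith

lemma proj_apply_eq {p : E →L[ℂ] E} (hp1 : p * p = p) {x : E}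
    (hx : x ∈ LinearMap.range (p : E →ₗ[ℂ] E)) : p x = x := by
  obtain ⟨z, rfl⟩ := hx
  have h := ContinuousLinearMap.ext_iff.mp hp1 z
  rw [ContinuousLinearMap.mul_apply] at h
  simpa using h

lemma pyth {q : E →L[ℂ] E} (hq1 : q * q = q) (hq2 : q† = q) (x : E) :
    ‖q x‖ ^ 2 + ‖x - q x‖ ^ 2 = ‖x‖ ^ 2 := by
  have hqq : q (q x) = q x := by
    have h := ContinuousLinearMap.ext_iff.mp hq1 x
    rwa [ContinuousLinearMap.mul_apply] at h
  have horth : ⟪q x, x - q x⟫_ℂ = 0 := by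
    nth_rewrite 1 [← hq2]
    rw [adjoint_inner_left, map_sub, hqq, sub_self, inner_zero_right]
  have h := norm_add_sq_eq_norm_sq_add_norm_sq_of_inner_eq_zero _ _ horth
  rw [show q x + (x - q x) = x by abel] at h
  nlinarith [h]

lemma contraction {q : E →L[ℂ] E} (hq1 : q * q = q) (hq2 : q† = q) (x : E) :
    ‖q x‖ ≤ ‖x‖ := by
  nlinarith [pyth hq1 hq2 x, norm_nonneg (q x), norm_nonneg x, norm_nonneg (x - q x),
    sq_nonneg (‖q x‖ + ‖x‖)]

/-- Norm formula: `‖(1-q)p‖² = 1 - m²` where `m` is the min of `‖q u‖` over the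
unit sphere of the range of `p`. -/
lemma normA (p q : E →L[ℂ] E) (hp1 : p * p = p) (hp2 : p† = p)
    (hq1 : q * q = q) (hq2 : q† = q)
    {x₀ : E} (hmem : x₀ ∈ LinearMap.range (p : E →ₗ[ℂ] E)) (hx₀ : ‖x₀‖ = 1)
    (hmin : ∀ u ∈ LinearMap.range (p : E →ₗ[ℂ] E), ‖u‖ = 1 → ‖q x₀‖ ≤ ‖q u‖) :
    ‖(1 - q) * p‖ ^ 2 = 1 - ‖q x₀‖ ^ 2 := by
  set U := LinearMap.range (p : E →ₗ[ℂ] E) with hU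
  set m := ‖q x₀‖ with hmdef
  have hm0 : 0 ≤ m := norm_nonneg _
  have hm1 : m ≤ 1 := by
    have := contraction hq1 hq2 x₀
    rwa [hx₀] at this
  have hm2 : 0 ≤ 1 - m ^ 2 := by nlinarith
  have hscale : ∀ u ∈ U, m * ‖u‖ ≤ ‖q u‖ := scale_gen q U hx₀ hmin
  have key : ∀ u ∈ U, ‖u - q u‖ ^ 2 ≤ (1 - m ^ 2) * ‖u‖ ^ 2 := by
    intro u hu
    have hsq : (m * ‖u‖) * (m * ‖u‖) ≤ ‖q u‖ * ‖q u‖ :=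
      mul_self_le_mul_self (mul_nonneg hm0 (norm_nonneg u)) (hscale u hu)
    nlinarith [pyth hq1 hq2 u, norm_nonneg u, norm_nonneg (q u)]
  have happ : ∀ x : E, ((1 - q) * p) x = p x - q (p x) := by
    intro x
    simp [ContinuousLinearMap.mul_apply, ContinuousLinearMap.sub_apply]
  have hA_le : ‖(1 - q) * p‖ ≤ Real.sqrt (1 - m ^ 2) := by
    refine opNorm_le_bound _ (Real.sqrt_nonneg _) fun x => ?_
    have h2 : ‖p x - q (p x)‖ ^ 2 ≤ (1 - m ^ 2) * ‖p x‖ ^ 2 :=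
      key _ (LinearMap.mem_range_self _ x)
    have h3 : ‖p x‖ ≤ ‖x‖ := contraction hp1 hp2 x
    have h4 : ‖p x - q (p x)‖ ^ 2 ≤ (1 - m ^ 2) * ‖x‖ ^ 2 := by
      have hsq : ‖p x‖ * ‖p x‖ ≤ ‖x‖ * ‖x‖ := mul_self_le_mul_self (norm_nonneg (p x)) h3
      nlinarith [norm_nonneg (p x), norm_nonneg x]
    rw [happ x]
    calc ‖p x - q (p x)‖ = Real.sqrt (‖p x - q (p x)‖ ^ 2) :=
          (Real.sqrt_sq (norm_nonneg _)).symm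
      _ ≤ Real.sqrt ((1 - m ^ 2) * ‖x‖ ^ 2) := Real.sqrt_le_sqrt h4
      _ = Real.sqrt (1 - m ^ 2) * ‖x‖ := by
          rw [Real.sqrt_mul hm2, Real.sqrt_sq (norm_nonneg _)]
  have hA_ge : Real.sqrt (1 - m ^ 2) ≤ ‖(1 - q) * p‖ := by
    have hpx : p x₀ = x₀ := proj_apply_eq hp1 hmem
    have h1 : ((1 - q) * p) x₀ = x₀ - q x₀ := by rw [happ, hpx]
    have h2 : ‖x₀ - q x₀‖ ^ 2 = 1 - m ^ 2 := by
      have := pyth hq1 hq2 x₀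
      rw [hx₀] at this
      nlinarith
    have h3 := le_opNorm ((1 - q) * p) x₀
    rw [h1, hx₀, mul_one] at h3
    calc Real.sqrt (1 - m ^ 2) = Real.sqrt (‖x₀ - q x₀‖ ^ 2) := by rw [h2]
      _ = ‖x₀ - q x₀‖ := Real.sqrt_sq (norm_nonneg _)
      _ ≤ _ := h3
  have heq : ‖(1 - q) * p‖ = Real.sqrt (1 - m ^ 2) := le_antisymm hA_le hA_ge
  rw [heq, Real.sq_sqrt hm2]

/-- The two one-sided errors have equal norms when the projections have equal rank. -/
theorem key_eq (p q : E →L[ℂ] E) (hp1 : p * p = p) (hp2 : p† = p)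
    (hq1 : q * q = q) (hq2 : q† = q)
    (hrank : finrank ℂ (LinearMap.range (p : E →ₗ[ℂ] E)) =
      finrank ℂ (LinearMap.range (q : E →ₗ[ℂ] E))) :
    ‖(1 - q) * p‖ = ‖(1 - p) * q‖ := by
  set U := LinearMap.range (p : E →ₗ[ℂ] E) with hUdef
  set V := LinearMap.range (q : E →ₗ[ℂ] E) with hVdef
  by_cases h0 : finrank ℂ U = 0
  · have hU : U = ⊥ := Submodule.finrank_eq_zero.mp h0
    have hV : V = ⊥ := Submodule.finrank_eq_zero.mp (hrank ▸ h0)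
    have hp0 : p = 0 := by
      ext x
      have hx : p x ∈ U := LinearMap.mem_range_self _ x
      rw [hU, Submodule.mem_bot] at hx
      simpa using hx
    have hq0 : q = 0 := by
      ext x
      have hx : q x ∈ V := LinearMap.mem_range_self _ x
      rw [hV, Submodule.mem_bot] at hx
      simpa using hx
    rw [hp0, hq0]
  · have hpos : 0 < finrank ℂ U := Nat.pos_of_ne_zero h0
    haveI : Nontrivial U := Module.nontrivial_of_finrank_pos hpos
    haveI : Nontrivial V := Module.nontrivial_of_finrank_pos (hrank ▸ hpos)
    -- minimizers on the spheres
    obtain ⟨x₀, hx₀s, hx₀min⟩ := (isCompact_sphere (0:U) 1).exists_isMinOn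
      (NormedSpace.sphere_nonempty.mpr zero_le_one)
      ((q.continuous.comp continuous_subtype_val).norm.continuousOn)
    obtain ⟨y₀, hy₀s, hy₀min⟩ := (isCompact_sphere (0:V) 1).exists_isMinOn
      (NormedSpace.sphere_nonempty.mpr zero_le_one)
      ((p.continuous.comp continuous_subtype_val).norm.continuousOn)
    rw [isMinOn_iff] at hx₀min hy₀min
    rw [mem_sphere_zero_iff_norm] at hx₀s hy₀s
    -- the operators between the ranges
    have hTmem : ∀ x : U, q (x : E) ∈ V := fun x => LinearMap.mem_range_self _ _
    have hSmem : ∀ y : V, p (y : E) ∈ U := fun y => LinearMap.mem_range_self _ _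
    set T : U →L[ℂ] V := ContinuousLinearMap.codRestrict (q ∘L U.subtypeL) V
      (fun x => hTmem x) with hTdef
    set S : V →L[ℂ] U := ContinuousLinearMap.codRestrict (p ∘L V.subtypeL) U
      (fun y => hSmem y) with hSdef
    have hTapp : ∀ x : U, ((T x : E)) = q (x : E) := fun x => rfl
    have hSapp : ∀ y : V, ((S y : E)) = p (y : E) := fun y => rfl
    have hTnorm : ∀ x : U, ‖T x‖ = ‖q (x : E)‖ := fun x => rfl
    have hSnorm : ∀ y : V, ‖S y‖ = ‖p (y : E)‖ := fun y => rfl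
    have hTS : S = T† := by
      rw [eq_adjoint_iff]
      intro y x
      have hx : p (x : E) = (x : E) := proj_apply_eq hp1 x.2
      have hy : q (y : E) = (y : E) := proj_apply_eq hq1 y.2
      have hL : ⟪S y, x⟫_ℂ = ⟪p (y : E), (x : E)⟫_ℂ := rfl
      have hR : ⟪y, T x⟫_ℂ = ⟪(y : E), q (x : E)⟫_ℂ := rfl
      rw [hL, hR]
      nth_rewrite 1 [← hp2]
      rw [adjoint_inner_left, hx]
      nth_rewrite 1 [← hq2]
      rw [adjoint_inner_right, hy]
    have hmineq : ‖q (x₀ : E)‖ = ‖p (y₀ : E)‖ := by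
      have h := min_eq T hrank (x₀ := x₀) hx₀s
        (fun x hx => by
          rw [hTnorm, hTnorm]
          exact hx₀min x (mem_sphere_zero_iff_norm.mpr hx))
        (y₀ := y₀) hy₀s
        (fun y hy => by
          rw [← hTS, hSnorm, hSnorm]
          exact hy₀min y (mem_sphere_zero_iff_norm.mpr hy))
      rw [← hTS] at h
      rw [← hTnorm, ← hSnorm, h]
    have e1 := normA p q hp1 hp2 hq1 hq2 (x₀ := (x₀ : E)) x₀.2 hx₀s
      (fun u hu hu1 => by
        have := hx₀min ⟨u, hu⟩ (mem_sphere_zero_iff_norm.mpr hu1)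
        exact this)
    have e2 := normA q p hq1 hq2 hp1 hp2 (x₀ := (y₀ : E)) y₀.2 hy₀s
      (fun u hu hu1 => by
        have := hy₀min ⟨u, hu⟩ (mem_sphere_zero_iff_norm.mpr hu1)
        exact this)
    have hsq : ‖(1 - q) * p‖ ^ 2 = ‖(1 - p) * q‖ ^ 2 := by
      rw [e1, e2, hmineq]
    calc ‖(1 - q) * p‖ = Real.sqrt (‖(1 - q) * p‖ ^ 2) := (Real.sqrt_sq (norm_nonneg _)).symm
      _ = Real.sqrt (‖(1 - p) * q‖ ^ 2) := by rw [hsq]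
      _ = ‖(1 - p) * q‖ := Real.sqrt_sq (norm_nonneg _)

/-- The main abstract result: `‖q - p‖ = ‖(1-q)p‖`. -/
theorem norm_diff (p q : E →L[ℂ] E) (hp1 : p * p = p) (hp2 : p† = p)
    (hq1 : q * q = q) (hq2 : q† = q)
    (hrank : finrank ℂ (LinearMap.range (p : E →ₗ[ℂ] E)) =
      finrank ℂ (LinearMap.range (q : E →ₗ[ℂ] E))) :
    ‖q - p‖ = ‖(1 - q) * p‖ := by
  have hMB : ‖(1 - p) * q‖ = ‖(1 - q) * p‖ := (key_eq p q hp1 hp2 hq1 hq2 hrank).symm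
  set M := ‖(1 - q) * p‖ with hMdef
  have hM0 : 0 ≤ M := norm_nonneg _
  have hadj : ‖p * (1 - q)‖ = M := by
    have h1 : star ((1 - q) * p) = p * (1 - q) := by
      rw [StarMul.star_mul, star_sub, star_one]
      rw [star_eq_adjoint, star_eq_adjoint, hp2, hq2]
    rw [← h1, star_eq_adjoint, hMdef]
    exact LinearIsometryEquiv.norm_map ContinuousLinearMap.adjoint _
  refine le_antisymm ?_ ?_
  · refine opNorm_le_bound _ hM0 fun x => ?_
    set u := q x - p (q x) with hu
    set v := p x - p (q x) with hv
    have hqq : q (q x) = q x := by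
      have h := ContinuousLinearMap.ext_iff.mp hq1 x
      rwa [ContinuousLinearMap.mul_apply] at h
    have hdecomp : (q - p) x = u - v := by
      rw [hu, hv]
      simp only [ContinuousLinearMap.sub_apply]
      abel
    have horth : ⟪u, v⟫_ℂ = 0 := by
      rw [hu, hv]
      have h1 : ⟪p x - p (q x), q x - p (q x)⟫_ℂ = 0 := by
        have h2 : p x - p (q x) = p (x - q x) := by rw [map_sub]
        rw [h2]
        nth_rewrite 1 [← hp2]
        rw [adjoint_inner_left, map_sub]
        have hpp : p (p (q x)) = p (q x) := by
          have h := ContinuousLinearMap.ext_iff.mp hp1 (q x)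
          rwa [ContinuousLinearMap.mul_apply] at h
        rw [hpp, sub_self, inner_zero_right]
      rw [← inner_conj_symm, h1, map_zero]
    have hpyth : ‖u - v‖ ^ 2 = ‖u‖ ^ 2 + ‖v‖ ^ 2 := by
      have h1 : ⟪u, -v⟫_ℂ = 0 := by rw [inner_neg_right, horth, neg_zero]
      have h2 := norm_add_sq_eq_norm_sq_add_norm_sq_of_inner_eq_zero u (-v) h1
      rw [show u + -v = u - v by abel, norm_neg] at h2
      nlinarith [h2]
    have hub : ‖u‖ ≤ M * ‖q x‖ := by
      have h1 : ((1 - p) * q) (q x) = u := by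
        rw [hu]
        simp only [ContinuousLinearMap.mul_apply, ContinuousLinearMap.sub_apply,
          ContinuousLinearMap.one_apply, hqq]
      calc ‖u‖ = ‖((1 - p) * q) (q x)‖ := by rw [h1]
        _ ≤ ‖(1 - p) * q‖ * ‖q x‖ := le_opNorm _ _
        _ = M * ‖q x‖ := by rw [hMB]
    have hvb : ‖v‖ ≤ M * ‖x - q x‖ := by
      have h1 : (p * (1 - q)) (x - q x) = v := by
        rw [hv]
        simp only [ContinuousLinearMap.mul_apply, ContinuousLinearMap.sub_apply,
          ContinuousLinearMap.one_apply, map_sub, hqq]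
        abel
      calc ‖v‖ = ‖(p * (1 - q)) (x - q x)‖ := by rw [h1]
        _ ≤ ‖p * (1 - q)‖ * ‖x - q x‖ := le_opNorm _ _
        _ = M * ‖x - q x‖ := by rw [hadj]
    have hx2 := pyth hq1 hq2 x
    have hfin : ‖(q - p) x‖ ^ 2 ≤ (M * ‖x‖) ^ 2 := by
      rw [hdecomp, hpyth]
      have hh1 : ‖u‖ * ‖u‖ ≤ (M * ‖q x‖) * (M * ‖q x‖) :=
        mul_self_le_mul_self (norm_nonneg u) hub
      have hh2 : ‖v‖ * ‖v‖ ≤ (M * ‖x - q x‖) * (M * ‖x - q x‖) :=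
        mul_self_le_mul_self (norm_nonneg v) hvb
      nlinarith [hx2, sq_nonneg M]
    calc ‖(q - p) x‖ = Real.sqrt (‖(q - p) x‖ ^ 2) := (Real.sqrt_sq (norm_nonneg _)).symm
      _ ≤ Real.sqrt ((M * ‖x‖) ^ 2) := Real.sqrt_le_sqrt hfin
      _ = M * ‖x‖ := Real.sqrt_sq (mul_nonneg hM0 (norm_nonneg x))
  · have h1 : (1 - q) * p = (p - q) * p := by
      rw [sub_mul, sub_mul, one_mul, hp1]
    have hp_le : ‖p‖ ≤ 1 := by
      refine opNorm_le_bound _ zero_le_one fun x => ?_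
      rw [one_mul]
      exact contraction hp1 hp2 x
    calc M = ‖(p - q) * p‖ := by rw [hMdef, h1]
      _ ≤ ‖p - q‖ * ‖p‖ := opNorm_comp_le _ _
      _ ≤ ‖p - q‖ * 1 := mul_le_mul_of_nonneg_left hp_le (norm_nonneg _)
      _ = ‖q - p‖ := by rw [mul_one, norm_sub_rev]

end ProjDiffAux

open ProjDiffAux ContinuousLinearMap Module in
/-- Equivalence of subspace approximation errors for orthogonal projectors
of the same rank: `‖Q - P‖ = ‖(I - Q)P‖ = ‖(I - P)Q‖`. -/
theorem specNorm_proj_diff_eq {N : ℕ} (P Q : Matrix (Fin N) (Fin N) ℂ)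
    (hP1 : P * P = P) (hP2 : Pᴴ = P)
    (hQ1 : Q * Q = Q) (hQ2 : Qᴴ = Q)
    (hrank : P.rank = Q.rank) :
    specNorm (Q - P) = specNorm ((1 - Q) * P) ∧
    specNorm (Q - P) = specNorm ((1 - P) * Q) := by
  set Φ := Matrix.toEuclideanCLM (𝕜 := ℂ) (n := Fin N) with hΦ
  set p := Φ P with hp
  set q := Φ Q with hq
  have hp1 : p * p = p := by rw [hp, ← _root_.map_mul, hP1]
  have hq1 : q * q = q := by rw [hq, ← _root_.map_mul, hQ1]
  have hp2 : ContinuousLinearMap.adjoint p = p := by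
    rw [← ContinuousLinearMap.star_eq_adjoint, hp, ← StarHomClass.map_star, Matrix.star_eq_conjTranspose, hP2]
  have hq2 : ContinuousLinearMap.adjoint q = q := by
    rw [← ContinuousLinearMap.star_eq_adjoint, hq, ← StarHomClass.map_star, Matrix.star_eq_conjTranspose, hQ2]
  have hrk : ∀ M : Matrix (Fin N) (Fin N) ℂ, M.rank =
      finrank ℂ (LinearMap.range ((Φ M : EuclideanSpace ℂ (Fin N) →L[ℂ] EuclideanSpace ℂ (Fin N)) :
        EuclideanSpace ℂ (Fin N) →ₗ[ℂ] EuclideanSpace ℂ (Fin N))) := by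
    intro M
    rw [hΦ]
    rw [Matrix.coe_toEuclideanCLM_eq_toEuclideanLin]
    rw [show (Matrix.toEuclideanLin M : EuclideanSpace ℂ (Fin N) →ₗ[ℂ] EuclideanSpace ℂ (Fin N)) =
      Matrix.toLin (PiLp.basisFun 2 ℂ (Fin N)) (PiLp.basisFun 2 ℂ (Fin N)) M from by
        rw [Matrix.toEuclideanLin_eq_toLin]]
    exact Matrix.rank_eq_finrank_range_toLin M _ _
  have hrank' : finrank ℂ (LinearMap.range
      ((p : EuclideanSpace ℂ (Fin N) →L[ℂ] EuclideanSpace ℂ (Fin N)) :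
        EuclideanSpace ℂ (Fin N) →ₗ[ℂ] EuclideanSpace ℂ (Fin N))) =
      finrank ℂ (LinearMap.range
      ((q : EuclideanSpace ℂ (Fin N) →L[ℂ] EuclideanSpace ℂ (Fin N)) :
        EuclideanSpace ℂ (Fin N) →ₗ[ℂ] EuclideanSpace ℂ (Fin N))) := by
    rw [hp, hq, ← hrk, ← hrk, hrank]
  have hmain := norm_diff p q hp1 hp2 hq1 hq2 hrank'
  have hkey := key_eq p q hp1 hp2 hq1 hq2 hrank'
  have hA : specNorm ((1 - Q) * P) = ‖(1 - q) * p‖ := by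
    rw [specNorm, hp, hq, hΦ]
    rw [_root_.map_mul, _root_.map_sub, _root_.map_one]
  have hB : specNorm ((1 - P) * Q) = ‖(1 - p) * q‖ := by
    rw [specNorm, hp, hq, hΦ]
    rw [_root_.map_mul, _root_.map_sub, _root_.map_one]
  have hD : specNorm (Q - P) = ‖q - p‖ := by
    rw [specNorm, hp, hq, hΦ, _root_.map_sub]
  exact ⟨by rw [hD, hA, hmain], by rw [hD, hB, hmain, hkey]⟩
end

section
/- Let A be a Hermitian N × N matrix, P an orthogonal projector commuting with A, and Q any orthogonal projector. With Δ := Q - P, the trace identity tr(A Δ) = tr(A (I - 2P) Δ²) holds. -/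
open Matrix

set_option maxHeartbeats 1000000 in
/-- Squaring effect of the Ritz-value difference:
for `Δ = Q - P`, `tr(AΔ) = tr(A (I - 2P) Δ²)`. -/
theorem trace_energy_difference {N : ℕ} (A P Q : Matrix (Fin N) (Fin N) ℂ)
    (hA : A.IsHermitian)
    (hP1 : P * P = P) (hP2 : Pᴴ = P) (hPA : A * P = P * A)
    (hQ1 : Q * Q = Q) (hQ2 : Qᴴ = Q) :
    (A * (Q - P)).trace = (A * (1 - (2 : ℂ) • P) * (Q - P) ^ 2).trace := by
  have e : A * (1 - (2:ℂ)•P) * (Q - P)^2 =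
      A*(Q*Q) - A*(Q*P) - A*(P*Q) + A*(P*P) - (2:ℂ)•(A*(P*(Q*Q))) + (2:ℂ)•(A*(P*(Q*P)))
        + (2:ℂ)•(A*(P*(P*Q))) - (2:ℂ)•(A*(P*(P*P))) := by
    simp only [pow_two, mul_sub, sub_mul, mul_one, one_mul, smul_mul_assoc,
      mul_smul_comm, mul_assoc]
    abel
  have t1 : (A*(Q*P)).trace = (A*(P*Q)).trace := by
    rw [← mul_assoc, Matrix.trace_mul_cycle, ← hPA, mul_assoc]
  have t2 : (A*(P*(Q*P))).trace = (A*(P*Q)).trace := by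
    rw [← mul_assoc, ← mul_assoc, Matrix.trace_mul_cycle, ← mul_assoc, ← hPA,
      mul_assoc A P P, hP1, mul_assoc]
  have t3 : (A*(P*(P*Q))).trace = (A*(P*Q)).trace := by
    rw [← mul_assoc P P Q, hP1]
  rw [e]
  simp only [hP1, hQ1, Matrix.trace_sub, Matrix.trace_add, Matrix.trace_smul, t1, t2, t3,
    Matrix.mul_sub, smul_eq_mul]
  ring
end

section
/- Let {P^(β)}_{β ∈ ℕ₀^d} be matrices in ℂ^{N×N} satisfying the convolution identity P^(β) = Σ_{ν₁ + ν₂ = β} P^(ν₁) P^(ν₂) for every multi-index β, and suppose rank P^(0) = m₀ (where 0 is the zero multi-index). Then for every β = (β₁,…,β_d), rank P^(β) ≤ m₀ · Π_{j=1}^d (β_j + 1). -/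
/-!
View `P` as a formal power series `F` with matrix coefficients; the convolution identity says
`F * F = F`. For every `e`, idempotency gives `F * (1 - F + F * e) = F * e`. Taking `e = C (P 0)`,
the factor `1 - F + F * e` has constant coefficient `1 - P 0 + P 0 * P 0 = 1`, so it has an inverse
`V` and `F = F * C (P 0) * V`. The coefficient of `x^β` then writes `P β` as a sum, over the
`∏ j, (β j + 1)` pairs `ν + μ = β`, of the matrices `P ν * P 0 * V_μ`, each of rank at most
`rank (P 0)`.
-/

open Finset MvPowerSeries

theorem IsIdempotentElem.mul_one_sub_add_mul {A : Type*} [Ring A] {p : A}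
    (hp : IsIdempotentElem p) (e : A) : p * (1 - p + p * e) = p * e := by
  rw [mul_add, mul_sub, mul_one, hp.eq, ← mul_assoc, hp.eq, sub_self, zero_add]

theorem MvPowerSeries.IsIdempotentElem.exists_eq_mul_C_constantCoeff_mul {σ R : Type*} [Ring R]
    {F : MvPowerSeries σ R} (hF : IsIdempotentElem F) :
    ∃ V, F = F * C (constantCoeff F) * V := by
  have hu : IsUnit (1 - F + F * C (constantCoeff F)) := by
    rw [isUnit_iff_constantCoeff]
    simp [(hF.map constantCoeff).eq]
  obtain ⟨V, hV⟩ := hu.exists_right_inv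
  exact ⟨V, by rw [← hF.mul_one_sub_add_mul, mul_assoc, hV, mul_one]⟩

theorem Matrix.rank_add_le {m n K : Type*} [Fintype m] [Fintype n] [Field K]
    (A B : Matrix m n K) : (A + B).rank ≤ A.rank + B.rank := by
  rw [Matrix.rank, Matrix.mulVecLin_add]
  exact (Submodule.finrank_mono (LinearMap.range_add_le _ _)).trans
    (Submodule.finrank_add_le_finrank_add_finrank _ _)

theorem Matrix.rank_sum_le {ι m n K : Type*} [Fintype m] [Fintype n] [Field K]
    (s : Finset ι) (A : ι → Matrix m n K) : (∑ i ∈ s, A i).rank ≤ ∑ i ∈ s, (A i).rank :=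
  sum_hom_rel (r := fun (M : Matrix m n K) k => M.rank ≤ k) rank_zero.le
    fun _ _ _ h => (rank_add_le _ _).trans (by gcongr)

theorem Finsupp.card_antidiagonal {ι : Type*} [Fintype ι] [DecidableEq ι] (β : ι →₀ ℕ) :
    #(antidiagonal β) = ∏ i, (β i + 1) := by
  calc #(antidiagonal β) = #(Iic β) := by
        refine card_bij' (fun a _ => a.1) (fun a _ => (a, β - a)) ?_ ?_ ?_ ?_
        · rintro ⟨a, b⟩ h
          rw [HasAntidiagonal.mem_antidiagonal] at h
          exact mem_Iic.mpr (h ▸ le_self_add)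
        · intro a h
          exact HasAntidiagonal.mem_antidiagonal.mpr (add_tsub_cancel_of_le (mem_Iic.mp h))
        · rintro ⟨a, b⟩ h
          rw [HasAntidiagonal.mem_antidiagonal] at h
          simp [← h]
        · exact fun _ _ => rfl
    _ = ∏ i, (β i + 1) := by
      simp only [Finsupp.card_Iic, Nat.card_Iic]
      refine prod_subset (subset_univ _) fun i _ hi => ?_
      simp [Finsupp.notMem_support_iff.mp hi]

theorem MvPowerSeries.rank_coeff_le_of_isIdempotentElem {σ m K : Type*} [DecidableEq σ]
    [Fintype m] [DecidableEq m] [Field K] {F : MvPowerSeries σ (Matrix m m K)}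
    (hF : IsIdempotentElem F) (β : σ →₀ ℕ) :
    (coeff β F).rank ≤ #(antidiagonal β) * (constantCoeff F).rank := by
  obtain ⟨V, hV⟩ := hF.exists_eq_mul_C_constantCoeff_mul
  calc (coeff β F).rank
      = (∑ p ∈ antidiagonal β, coeff p.1 F * constantCoeff F * coeff p.2 V).rank := by
        conv_lhs => rw [hV, coeff_mul]
        simp only [coeff_mul_C]
    _ ≤ ∑ p ∈ antidiagonal β, (coeff p.1 F * constantCoeff F * coeff p.2 V).rank :=
        Matrix.rank_sum_le _ _
    _ ≤ ∑ p ∈ antidiagonal β, (constantCoeff F).rank :=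
        sum_le_sum fun _ _ => (Matrix.rank_mul_le_left _ _).trans (Matrix.rank_mul_le_right _ _)
    _ = #(antidiagonal β) * (constantCoeff F).rank := by rw [sum_const, smul_eq_mul]

/-- Upper bound on the rank of the coefficient matrices of an idempotent-valued
analytic matrix function: if the coefficients satisfy the convolution identity
`P^(β) = Σ_{ν₁+ν₂=β} P^(ν₁) P^(ν₂)` and `rank P^(0) = m₀`, then
`rank P^(β) ≤ m₀ ∏ⱼ (βⱼ + 1)`. -/
theorem rank_projector_coefficients {d N m₀ : ℕ}
    (P : (Fin d →₀ ℕ) → Matrix (Fin N) (Fin N) ℂ)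
    (hconv : ∀ β : Fin d →₀ ℕ,
      P β = ∑ p ∈ Finset.HasAntidiagonal.antidiagonal β, P p.1 * P p.2)
    (hrank : (P 0).rank = m₀) (β : Fin d →₀ ℕ) :
    (P β).rank ≤ m₀ * ∏ j : Fin d, (β j + 1) := by
  let F : MvPowerSeries (Fin d) (Matrix (Fin N) (Fin N) ℂ) := P
  have hF : IsIdempotentElem F := by
    refine MvPowerSeries.ext fun β => ?_
    rw [coeff_mul]
    exact (hconv β).symm
  calc (P β).rank ≤ #(antidiagonal β) * (P 0).rank := rank_coeff_le_of_isIdempotentElem hF β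
    _ = m₀ * ∏ j : Fin d, (β j + 1) := by rw [hrank, Finsupp.card_antidiagonal, mul_comm]
end

section
/- Let A and P be N × N matrices with A Hermitian, P an orthogonal projector commuting with A of rank m₀, U₀ ∈ ℂ^{N×m₀} with orthonormal columns, U := P U₀, and C := U₀* P U₀ invertible. Then A U = U C^{-1} U₀* A U. -/
open Matrix

/-- With `U = P U₀`, `C = U₀ᴴ P U₀` invertible, `P` an orthogonal projector of rank `m₀`
commuting with the Hermitian matrix `A`: `A U = U C⁻¹ (U₀ᴴ A U)`. -/
theorem AU_identity {N m₀ : ℕ}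
    (A P : Matrix (Fin N) (Fin N) ℂ) (U₀ : Matrix (Fin N) (Fin m₀) ℂ)
    (hA : A.IsHermitian)
    (hP1 : P * P = P) (hP2 : Pᴴ = P) (hPA : A * P = P * A) (hrk : P.rank = m₀)
    (hU : U₀ᴴ * U₀ = 1) (hC : IsUnit (U₀ᴴ * P * U₀)) :
    A * (P * U₀) = (P * U₀) * (U₀ᴴ * P * U₀)⁻¹ * (U₀ᴴ * A * (P * U₀)) := by
  set C := U₀ᴴ * P * U₀ with hCdef
  have hCdet : IsUnit C.det := (Matrix.isUnit_iff_isUnit_det C).mp hC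
  have hCinv : C⁻¹ * C = 1 := Matrix.nonsing_inv_mul C hCdet
  have hCinv' : C * C⁻¹ = 1 := Matrix.mul_nonsing_inv C hCdet
  set Q := P * U₀ * C⁻¹ * (U₀ᴴ * P) with hQdef
  have hQ2 : Q = P * (U₀ * C⁻¹ * (U₀ᴴ * P)) := by
    simp only [hQdef, Matrix.mul_assoc]
  -- Q is idempotent
  have hQQ : Q * Q = Q := by
    calc Q * Q = P * U₀ * C⁻¹ * (U₀ᴴ * (P * P) * U₀ * C⁻¹ * (U₀ᴴ * P)) := by
          simp only [hQdef, Matrix.mul_assoc]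
      _ = P * U₀ * (C⁻¹ * C * (C⁻¹ * (U₀ᴴ * P))) := by
          rw [hP1, ← hCdef]; simp only [Matrix.mul_assoc]
      _ = Q := by rw [hCinv, Matrix.one_mul, hQdef]; simp only [Matrix.mul_assoc]
  -- Q * U₀ = P * U₀
  have hQU : Q * U₀ = P * U₀ := by
    calc Q * U₀ = P * U₀ * (C⁻¹ * C) := by
          simp only [hQdef, hCdef, Matrix.mul_assoc]
      _ = P * U₀ := by rw [hCinv, Matrix.mul_one]
  -- rank Q = m₀
  have hrkC : C.rank = m₀ := by
    rw [Matrix.rank_of_isUnit C hC, Fintype.card_fin]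
  have hrkQ_le : Q.rank ≤ m₀ := by
    have := Matrix.rank_mul_le_left P (U₀ * C⁻¹ * (U₀ᴴ * P))
    rw [← hQ2, hrk] at this
    exact this
  have hrkQ_ge : m₀ ≤ Q.rank := by
    have hCQ : C = U₀ᴴ * (Q * U₀) := by
      rw [hQU, hCdef, Matrix.mul_assoc]
    have h1 : C.rank ≤ (Q * U₀).rank := by
      rw [hCQ]; exact Matrix.rank_mul_le_right _ _
    have h2 : (Q * U₀).rank ≤ Q.rank := Matrix.rank_mul_le_left _ _
    omega
  -- ranges equal
  have hle : LinearMap.range Q.mulVecLin ≤ LinearMap.range P.mulVecLin := by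
    rw [hQ2, Matrix.mulVecLin_mul]
    exact LinearMap.range_comp_le_range _ _
  have hrange : LinearMap.range Q.mulVecLin = LinearMap.range P.mulVecLin :=
    Submodule.eq_of_le_of_finrank_eq hle (by
      change Q.rank = P.rank
      omega)
  -- Q * P = P
  have hQP : Q * P = P := by
    have key : ∀ v, (Q * P) *ᵥ v = P *ᵥ v := by
      intro v
      have hmem : P *ᵥ v ∈ LinearMap.range Q.mulVecLin := by
        rw [hrange]; exact ⟨v, rfl⟩
      obtain ⟨w, hw⟩ := hmem
      have hw' : Q *ᵥ w = P *ᵥ v := hw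
      calc (Q * P) *ᵥ v = Q *ᵥ (P *ᵥ v) := by rw [Matrix.mulVec_mulVec]
        _ = Q *ᵥ (Q *ᵥ w) := by rw [hw']
        _ = (Q * Q) *ᵥ w := by rw [Matrix.mulVec_mulVec]
        _ = P *ᵥ v := by rw [hQQ, hw']
    ext i j
    have h1 := congrFun (key (Pi.single j 1)) i
    simpa [Matrix.mulVec_single] using h1
  -- contraction lemma
  have hcontract : ∀ (X : Matrix (Fin N) (Fin m₀) ℂ),
      P * (U₀ * (C⁻¹ * (U₀ᴴ * (P * X)))) = P * X := by
    intro X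
    calc P * (U₀ * (C⁻¹ * (U₀ᴴ * (P * X)))) = Q * P * X := by
          simp only [hQdef, Matrix.mul_assoc]
          rw [← Matrix.mul_assoc P P X, hP1]
      _ = P * X := by rw [hQP]
  -- A commutes through P
  have hAPP : P * (A * (P * U₀)) = A * (P * U₀) := by
    calc P * (A * (P * U₀)) = P * A * P * U₀ := by simp only [Matrix.mul_assoc]
      _ = A * P * P * U₀ := by rw [hPA]
      _ = A * (P * U₀) := by
          rw [Matrix.mul_assoc A P P, hP1, Matrix.mul_assoc]
  calc A * (P * U₀) = P * (A * (P * U₀)) := hAPP.symm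
    _ = P * (U₀ * (C⁻¹ * (U₀ᴴ * (P * (A * (P * U₀)))))) := (hcontract _).symm
    _ = P * (U₀ * (C⁻¹ * (U₀ᴴ * (A * (P * U₀))))) := by rw [hAPP]
    _ = (P * U₀) * C⁻¹ * (U₀ᴴ * A * (P * U₀)) := by simp only [Matrix.mul_assoc]
end
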